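/- For the anti-Pell numbers (a = (1,2)), the subsequence A_{3n+1} is the arithmetic progression A_{3n+1} = 5 + 21n for all n ≥ 0. -/

import Mathlib

/-- `A` and `B` (indexed from 1) are complementary strictly increasing sequences
of positive integers: every positive integer lies in exactly one of their ranges. -/
def CompPair (A B : ℕ → ℕ) : Prop :=
  StrictMonoOn A (Set.Ici 1) ∧ StrictMonoOn B (Set.Ici 1) ∧
  (∀ n, 1 ≤ n → 1 ≤ A n) ∧ (∀ n, 1 ≤ n → 1 ≤ B n) ∧
  ∀ m, 1 ≤ m →
    ((∃ n, 1 ≤ n ∧ A n = m) ∧ ¬(∃ n, 1 ≤ n ∧ B n = m)) ∨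
    (¬(∃ n, 1 ≤ n ∧ A n = m) ∧ (∃ n, 1 ≤ n ∧ B n = m))

/-- `(A, B)` is the anti-recurrence pair for the positive linear form `a` of dimension `k`:
`A n = Σ_{j=1}^k a_j * B_{(n-1)k+j}` for all `n ≥ 1`. -/
def AntiRec (k : ℕ) (a : Fin k → ℕ) (A B : ℕ → ℕ) : Prop :=
  CompPair A B ∧
  ∀ n, 1 ≤ n → A n = ∑ j : Fin k, a j * B ((n - 1) * k + (j : ℕ) + 1)

/-!
The complement `B` lists, in increasing order, the positive integers that are not values of `A`.
Split the positive integers into blocks `7q+1, …, 7q+7`. By strong induction on `q`, the only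
value of `A` in block `q` is `A (q+1) ∈ {7q+4, 7q+5, 7q+6}`, so `B` enumerates the other six
numbers of the block: `B (6q+i) = 7q+i` for `i = 1, 2, 3` and `B (6q+6) = 7q+7`. The position of
`A (q+1)`, and the fact that no other value of `A` falls into block `q`, come from the blocks
below, because `A (m+1) = B (2m+1) + 2 B (2m+2)` only involves `B` at indices `≤ 2m+2`.
Finally `A (3n+1) = B (6n+1) + 2 B (6n+2) = (7n+1) + 2 (7n+2)`.
-/

namespace CompPair

variable {A B : ℕ → ℕ}

theorem A_lt_A_iff (h : CompPair A B) {i j : ℕ} (hi : 1 ≤ i) (hj : 1 ≤ j) :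
    A i < A j ↔ i < j :=
  h.1.lt_iff_lt hi hj

theorem A_le_A_iff (h : CompPair A B) {i j : ℕ} (hi : 1 ≤ i) (hj : 1 ≤ j) :
    A i ≤ A j ↔ i ≤ j :=
  h.1.le_iff_le hi hj

theorem B_lt_B_iff (h : CompPair A B) {i j : ℕ} (hi : 1 ≤ i) (hj : 1 ≤ j) :
    B i < B j ↔ i < j :=
  h.2.1.lt_iff_lt hi hj

theorem one_le_B (h : CompPair A B) {t : ℕ} (ht : 1 ≤ t) : 1 ≤ B t :=
  h.2.2.2.1 t ht

theorem A_ne_B (h : CompPair A B) {m t : ℕ} (hm : 1 ≤ m) (ht : 1 ≤ t) : A m ≠ B t := by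
  intro hmt
  rcases h.2.2.2.2 (B t) (h.one_le_B ht) with ⟨-, hnB⟩ | ⟨hnA, -⟩
  · exact hnB ⟨t, ht, rfl⟩
  · exact hnA ⟨m, hm, hmt⟩

theorem exists_B_eq (h : CompPair A B) {w : ℕ} (hw : 1 ≤ w) (hwA : ∀ m, 1 ≤ m → A m ≠ w) :
    ∃ t, 1 ≤ t ∧ B t = w := by
  rcases h.2.2.2.2 w hw with ⟨⟨m, hm, hAm⟩, -⟩ | ⟨-, hB⟩
  · exact absurd hAm (hwA m hm)
  · exact hB

theorem B_one_eq_one (h : CompPair A B) (h1 : ∀ m, 1 ≤ m → A m ≠ 1) : B 1 = 1 := by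
  obtain ⟨t, ht, hBt⟩ := h.exists_B_eq le_rfl h1
  have hle : B 1 ≤ B t := h.2.1.monotoneOn Set.self_mem_Ici ht ht
  have hpos : 1 ≤ B 1 := h.one_le_B le_rfl
  omega

theorem B_succ_eq (h : CompPair A B) {s w : ℕ} (hs : 1 ≤ s) (hlt : B s < w)
    (hwA : ∀ m, 1 ≤ m → A m ≠ w) (hgap : ∀ u, B s < u → u < w → ∃ m, 1 ≤ m ∧ A m = u) :
    B (s + 1) = w := by
  obtain ⟨t, ht, rfl⟩ := h.exists_B_eq (by omega) hwA
  have hst : s < t := (h.B_lt_B_iff hs ht).1 hlt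
  suffices hts : s + 1 = t from congrArg B hts
  by_contra hne
  obtain ⟨m, hm, hAm⟩ := hgap (B (s + 1)) ((h.B_lt_B_iff hs (by omega)).2 (by omega))
    ((h.B_lt_B_iff (by omega) ht).2 (by omega))
  exact h.A_ne_B hm (by omega) hAm

theorem B_add_eq (h : CompPair A B) {s v k : ℕ} (hs : 1 ≤ s) (hv : B s = v)
    (hfree : ∀ u, v < u → u ≤ v + k → ∀ m, 1 ≤ m → A m ≠ u) :
    ∀ i ≤ k, B (s + i) = v + i := by
  intro i hi
  induction i with
  | zero => exact hv
  | succ i ih =>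
    have hBi := ih (by omega)
    exact h.B_succ_eq (s := s + i) (by omega) (by omega) (hfree _ (by omega) (by omega))
      (fun u h1 h2 => absurd h2 (by omega))

theorem B_add_eq_of_unique_A (h : CompPair A B) {s v k p : ℕ} (hs : 1 ≤ s) (hv : B s = v)
    (hp : 1 ≤ p) (hvp : v < A p) (hpk : A p ≤ v + k)
    (hfree : ∀ u, v < u → u ≤ v + k + 1 → u ≠ A p → ∀ m, 1 ≤ m → A m ≠ u) :
    B (s + k) = v + k + 1 := by
  obtain ⟨i, hi⟩ : ∃ i, A p = v + i + 1 := ⟨A p - v - 1, by omega⟩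
  have hbefore : B (s + i) = v + i :=
    h.B_add_eq (k := i) hs hv (fun u h1 h2 => hfree u h1 (by omega) (by omega)) i le_rfl
  have hskip : B (s + i + 1) = v + i + 2 :=
    h.B_succ_eq (by omega) (by omega) (hfree _ (by omega) (by omega) (by omega))
      (fun u h1 h2 => ⟨p, hp, by omega⟩)
  have hafter := h.B_add_eq (k := k - i - 1) (by omega) hskip
    (fun u h1 h2 => hfree u (by omega) (by omega) (by omega)) (k - i - 1) le_rfl
  rwa [show s + i + 1 + (k - i - 1) = s + k by omega,
    show v + i + 2 + (k - i - 1) = v + k + 1 by omega] at hafter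

theorem eq_succ_of_A_lt_of_lt_A (h : CompPair A B) {p m : ℕ} (hp : 1 ≤ p) (hm : 1 ≤ m)
    (h1 : A p < A m) (h2 : A m < A (p + 2)) : m = p + 1 := by
  have := (h.A_lt_A_iff hp hm).1 h1
  have := (h.A_lt_A_iff hm (by omega)).1 h2
  omega

end CompPair

/-- Block `q` of `B` enumerates `7q+1, …, 7q+7` with one value of `A` left out; the two entries
not recorded here depend on which one. -/
structure AntiPellBlock (B : ℕ → ℕ) (q : ℕ) : Prop where
  one : B (6 * q + 1) = 7 * q + 1
  two : B (6 * q + 2) = 7 * q + 2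
  three : B (6 * q + 3) = 7 * q + 3
  six : B (6 * q + 6) = 7 * q + 7

variable {A B : ℕ → ℕ}

theorem CompPair.antiPellBlock_of_unique_A (h : CompPair A B) {q : ℕ}
    (hstart : B (6 * q + 1) = 7 * q + 1) (hlo : 7 * q + 3 < A (q + 1)) (hhi : A (q + 1) < 7 * q + 7)
    (honly : ∀ m, 1 ≤ m → 7 * q < A m → A m ≤ 7 * q + 7 → m = q + 1) :
    AntiPellBlock B q := by
  have hfree : ∀ u, 7 * q < u → u ≤ 7 * q + 7 → u ≠ A (q + 1) → ∀ m, 1 ≤ m → A m ≠ u := by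
    rintro u h1 h2 hne m hm rfl
    exact hne (congrArg A (honly m hm h1 h2))
  have hrun := h.B_add_eq (k := 2) (by omega) hstart
    (fun u h1 h2 => hfree u (by omega) (by omega) (by omega))
  have hsix := h.B_add_eq_of_unique_A (s := 6 * q + 3) (k := 3) (by omega) (hrun 2 le_rfl)
    (by omega) (by omega) (by omega) (fun u h1 h2 => hfree u (by omega) (by omega))
  exact ⟨hstart, hrun 1 (by omega), hrun 2 le_rfl, hsix⟩

theorem AntiRec.antiPell_apply_succ (h : AntiRec 2 ![1, 2] A B) (n : ℕ) :
    A (n + 1) = B (2 * n + 1) + 2 * B (2 * n + 2) := by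
  rw [h.2 (n + 1) (by omega), Fin.sum_univ_two, Nat.add_sub_cancel, mul_comm n 2]
  simp

theorem AntiRec.antiPell_apply_succ_bounds (h : AntiRec 2 ![1, 2] A B) {m : ℕ}
    (hblock : AntiPellBlock B (m / 3)) : 7 * m + 4 ≤ A (m + 1) ∧ A (m + 1) ≤ 7 * m + 6 := by
  obtain ⟨q, r, hr, rfl⟩ : ∃ q r, r < 3 ∧ m = 3 * q + r :=
    ⟨m / 3, m % 3, Nat.mod_lt _ (by norm_num), (Nat.div_add_mod m 3).symm⟩
  obtain ⟨b1, b2, b3, b6⟩ : AntiPellBlock B q := by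
    rwa [show (3 * q + r) / 3 = q by omega] at hblock
  have h34 : B (6 * q + 3) < B (6 * q + 4) := (h.1.B_lt_B_iff (by omega) (by omega)).2 (by omega)
  have h45 : B (6 * q + 4) < B (6 * q + 5) := (h.1.B_lt_B_iff (by omega) (by omega)).2 (by omega)
  have h56 : B (6 * q + 5) < B (6 * q + 6) := (h.1.B_lt_B_iff (by omega) (by omega)).2 (by omega)
  have hA := h.antiPell_apply_succ (3 * q + r)
  interval_cases r <;> ring_nf at * <;> omega

theorem AntiRec.antiPellBlock_zero (h : AntiRec 2 ![1, 2] A B) : AntiPellBlock B 0 := by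
  have hc := h.1
  have hA1 : A 1 = B 1 + 2 * B 2 := h.antiPell_apply_succ 0
  have hA2 : A 2 = B 3 + 2 * B 4 := h.antiPell_apply_succ 1
  have hB1pos : 1 ≤ B 1 := hc.one_le_B le_rfl
  have h12 : B 1 < B 2 := (hc.B_lt_B_iff le_rfl (by omega)).2 (by omega)
  have h23 : B 2 < B 3 := (hc.B_lt_B_iff (by omega) (by omega)).2 (by omega)
  have h34 : B 3 < B 4 := (hc.B_lt_B_iff (by omega) (by omega)).2 (by omega)
  have hA_ge : ∀ m, 1 ≤ m → A 1 ≤ A m := fun m hm => (hc.A_le_A_iff le_rfl hm).2 hm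
  have hB1 : B 1 = 1 := hc.B_one_eq_one fun m hm => by have := hA_ge m hm; omega
  have hB2 : B 2 = 2 := hc.B_succ_eq (s := 1) le_rfl (by omega)
    (fun m hm => by have := hA_ge m hm; omega) (fun u h1 h2 => absurd h2 (by omega))
  refine hc.antiPellBlock_of_unique_A (q := 0) hB1 (show 3 < A 1 by omega) (show A 1 < 7 by omega)
    fun m hm _ hm7 => ?_
  by_contra hne
  have : A 2 ≤ A m := (hc.A_le_A_iff (by omega) hm).2 (by omega)
  omega

theorem AntiRec.antiPellBlock_succ (h : AntiRec 2 ![1, 2] A B) {n : ℕ}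
    (ih : ∀ q ≤ n, AntiPellBlock B q) : AntiPellBlock B (n + 1) := by
  have hc := h.1
  have hprev := (ih n le_rfl).six
  obtain ⟨-, hA1⟩ := h.antiPell_apply_succ_bounds (ih (n / 3) (by omega))
  obtain ⟨hA2, hA2'⟩ : 7 * n + 11 ≤ A (n + 2) ∧ A (n + 2) ≤ 7 * n + 13 :=
    h.antiPell_apply_succ_bounds (ih ((n + 1) / 3) (by omega))
  obtain ⟨hA3, -⟩ : 7 * n + 18 ≤ A (n + 3) ∧ A (n + 3) ≤ 7 * n + 20 :=
    h.antiPell_apply_succ_bounds (ih ((n + 2) / 3) (by omega))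
  have honly : ∀ m, 1 ≤ m → 7 * (n + 1) < A m → A m ≤ 7 * (n + 1) + 7 → m = n + 2 :=
    fun m hm h1 h2 => hc.eq_succ_of_A_lt_of_lt_A (p := n + 1) (by omega) hm (by omega)
      (show A m < A (n + 3) by omega)
  have hstart : B (6 * (n + 1) + 1) = 7 * (n + 1) + 1 :=
    hc.B_succ_eq (s := 6 * n + 6) (by omega) (by omega)
      (fun m hm hAm => by have := honly m hm (by omega) (by omega); subst this; omega)
      (fun u h1 h2 => absurd h2 (by omega))
  exact hc.antiPellBlock_of_unique_A hstart (show 7 * n + 10 < A (n + 2) by omega)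
    (show A (n + 2) < 7 * n + 14 by omega) honly

theorem AntiRec.antiPellBlock (h : AntiRec 2 ![1, 2] A B) (q : ℕ) : AntiPellBlock B q := by
  induction q using Nat.strong_induction_on with
  | _ q ih =>
    cases q with
    | zero => exact h.antiPellBlock_zero
    | succ n => exact h.antiPellBlock_succ fun q hq => ih q (by omega)

/-- The anti-Pell subsequence A_{3n+1} is the arithmetic progression 5 + 21n. -/
theorem stmt18 (A B : ℕ → ℕ) (h : AntiRec 2 ![1, 2] A B) :
    ∀ n : ℕ, A (3 * n + 1) = 5 + 21 * n := by
  intro n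
  obtain ⟨h1, h2, -, -⟩ := h.antiPellBlock n
  rw [h.antiPell_apply_succ, show 2 * (3 * n) = 6 * n by ring, h1, h2]
  ring
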